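/- (Theorem 11) Let A, B ∈ M₂(ℂ) with 0 ≤ A ≤ I₂ and 0 ≤ B ≤ I₂, where I₂ is the identity matrix. Then A and B are strict and absolutely compatible if and only if there exist rank-one projections P and Q in M₂(ℂ) with P ≠ Q and P ≠ I₂ − Q, and a real number λ with 0 < λ < 1, such that A = (1 − λ)P + λQ and B = (1 − λ)P + λ(I₂ − Q). -/

import Mathlib

open scoped ComplexOrder

/-- The Loewner order on `M₂(ℂ)`: `X ≤ Y` iff `Y - X` is positive semidefinite. -/
def MatLE (X Y : Matrix (Fin 2) (Fin 2) ℂ) : Prop := (Y - X).PosSemidef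

/-- A projection: `P = P* = P²`. -/
def IsProj (P : Matrix (Fin 2) (Fin 2) ℂ) : Prop := star P = P ∧ P * P = P

/-- `X` (with `0 ≤ X ≤ 1`) is strict: the only projection `P ≤ X` is `0` and the only
projection with `P X = 0` is `0`. -/
def IsStrict (X : Matrix (Fin 2) (Fin 2) ℂ) : Prop :=
  (∀ P, IsProj P → MatLE P X → P = 0) ∧ (∀ P, IsProj P → P * X = 0 → P = 0)

/-- Absolute compatibility `|A - B| + |1 - A - B| = 1` in `M₂(ℂ)`, expressed via the (unique)
positive square roots `u` of `(A - B)* (A - B)` and `v` of `(1 - A - B)* (1 - A - B)`. -/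
def AbsCompatible (A B : Matrix (Fin 2) (Fin 2) ℂ) : Prop :=
  ∃ u v : Matrix (Fin 2) (Fin 2) ℂ, u.PosSemidef ∧ v.PosSemidef ∧
    u * u = star (A - B) * (A - B) ∧ v * v = star (1 - A - B) * (1 - A - B) ∧ u + v = 1

/-!
For `0 ≤ X ≤ 1` in `M₂(ℂ)`, strictness just says that `X` and `1 - X` are invertible. A singular
Hermitian `Y` is annihilated by the nonzero projection `1 - Y / tr Y` (by `1` if `Y = 0`), and for
`Y = 1 - X` that projection lies below `X`. Conversely, a projection `R ≤ X ≤ 1` satisfies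
`(1 - X) R = 0`.

Put `C = A - B`, `E = A + B - 1` and `u = |C|`, so that `1 - u = |E|`; subtracting the two squares
gives `u = A + B - AB - BA`. If `A` and `B` commuted, `(u - C)(u + C) = u² - C² = 0` would read
`4 (1 - A) A · B (1 - B) = 0`, making `B` a projection. Hence `A` and `B` do not commute. Since `u`
commutes with `C` and `E`, hence with `A` and `B`, and the commutant of a non-scalar `2 × 2` matrix
is commutative, `u = λ` is scalar. Then `C = λ J` and `E = (1 - λ) K` for self-adjoint unitaries
`J`, `K`, and `Q = (1 + J) / 2`, `P = (1 + K) / 2` are the projections sought; they cannot commute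
because `A` and `B` do not.

Conversely, `A - B = λ (2Q - 1)` and `A + B - 1 = (1 - λ) (2P - 1)` are multiples of self-adjoint
unitaries, which gives absolute compatibility. For strictness, `s R + t S` with `s, t > 0` and
distinct rank-one projections `R`, `S` is invertible: a common kernel vector would make the
traceless Hermitian matrix `R - S` singular, hence nilpotent, hence zero.
-/

open Matrix

section TwoByTwo

variable {K : Type*}

theorem Matrix.mul_self_eq_trace_smul_sub_det_smul [CommRing K] (M : Matrix (Fin 2) (Fin 2) K) :
    M * M = M.trace • M - M.det • (1 : Matrix (Fin 2) (Fin 2) K) := by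
  ext i j
  fin_cases i <;> fin_cases j <;> simp [mul_apply, trace_fin_two, det_fin_two] <;> ring

theorem Matrix.exists_eq_smul_one_add_smul_of_commute [Field K] {u M : Matrix (Fin 2) (Fin 2) K}
    (hu : ∀ c : K, u ≠ c • 1) (h : Commute u M) : ∃ a b : K, M = a • 1 + b • u := by
  have e i j := congrFun (congrFun h.eq i) j
  have e00 := e 0 0
  have e01 := e 0 1
  have e10 := e 1 0
  simp only [mul_apply, Fin.sum_univ_two] at e00 e01 e10
  obtain ⟨b, h01, h10, hdiag⟩ : ∃ b, M 0 1 = b * u 0 1 ∧ M 1 0 = b * u 1 0 ∧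
      M 0 0 - M 1 1 = b * (u 0 0 - u 1 1) := by
    by_cases hq : u 0 1 = 0
    · by_cases hr : u 1 0 = 0
      · have hd : u 0 0 - u 1 1 ≠ 0 := fun hd => hu (u 1 1) <| by
          ext i j; fin_cases i <;> fin_cases j <;> simp [hq, hr, sub_eq_zero.mp hd]
        refine ⟨(M 0 0 - M 1 1) / (u 0 0 - u 1 1), ?_, ?_, by field_simp⟩ <;> field_simp
        · linear_combination e01
        · linear_combination -e10
      · refine ⟨M 1 0 / u 1 0, ?_, by field_simp, ?_⟩ <;> field_simp
        · linear_combination -e00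
        · linear_combination e10
    · refine ⟨M 0 1 / u 0 1, by field_simp, ?_, ?_⟩ <;> field_simp
      · linear_combination e00
      · linear_combination -e01
  refine ⟨M 0 0 - b * u 0 0, b, ?_⟩
  ext i j
  fin_cases i <;> fin_cases j <;> simp [h01, h10]
  linear_combination -hdiag

theorem Matrix.commute_of_commute_of_ne_smul_one [Field K] {u M N : Matrix (Fin 2) (Fin 2) K}
    (hu : ∀ c : K, u ≠ c • 1) (hM : Commute u M) (hN : Commute u N) : Commute M N := by
  obtain ⟨a, b, rfl⟩ := exists_eq_smul_one_add_smul_of_commute hu hM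
  obtain ⟨c, d, rfl⟩ := exists_eq_smul_one_add_smul_of_commute hu hN
  have hu' : Commute (a • 1 + b • u) u :=
    ((Commute.one_left u).smul_left a).add_left ((Commute.refl u).smul_left b)
  exact ((Commute.one_right _).smul_right c).add_right (hu'.smul_right d)

variable [RCLike K]

theorem Matrix.IsHermitian.eq_zero_of_trace_eq_zero_of_det_eq_zero
    {H : Matrix (Fin 2) (Fin 2) K} (hH : H.IsHermitian) (htr : H.trace = 0) (hdet : H.det = 0) :
    H = 0 := by
  rw [← conjTranspose_mul_self_eq_zero, hH.eq, mul_self_eq_trace_smul_sub_det_smul, htr, hdet,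
    zero_smul, zero_smul, sub_zero]

theorem Matrix.PosSemidef.commute_of_mul_self_eq {w C : Matrix (Fin 2) (Fin 2) K}
    (hw : w.PosSemidef) (h : w * w = C * C) : Commute w C := by
  by_cases htr : w.trace = 0
  · rw [hw.trace_eq_zero_iff.mp htr]
    exact Commute.zero_left C
  have hw' : w = w.trace⁻¹ • (C * C + w.det • 1) := by
    rw [← h, mul_self_eq_trace_smul_sub_det_smul, sub_add_cancel, smul_smul, inv_mul_cancel₀ htr,
      one_smul]
  rw [hw']
  exact (((Commute.refl C).mul_left (Commute.refl C)).add_left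
    ((Commute.one_left C).smul_left _)).smul_left _

end TwoByTwo

local notation "M₂" => Matrix (Fin 2) (Fin 2) ℂ

theorem Matrix.det_smul_add_smul_ne_zero {R S : M₂} (hR : R.PosSemidef) (hS : S.PosSemidef)
    (htr : R.trace = S.trace) (hRS : R ≠ S) {s t : ℝ} (hs : 0 < s) (ht : 0 < t) :
    (s • R + t • S).det ≠ 0 := by
  intro hdet
  obtain ⟨x, hx, hx0⟩ := exists_mulVec_eq_zero_iff.mpr hdet
  have hsR := hR.smul hs.le
  have htS := hS.smul ht.le
  rw [add_mulVec] at hx0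
  obtain ⟨h1, h2⟩ := (add_eq_zero_iff_of_nonneg (hsR.dotProduct_mulVec_nonneg x)
    (htS.dotProduct_mulVec_nonneg x)).mp (by rw [← dotProduct_add, hx0, dotProduct_zero])
  have hRx : R *ᵥ x = 0 := by
    have := (hsR.dotProduct_mulVec_zero_iff x).mp h1
    rwa [smul_mulVec, smul_eq_zero, or_iff_right hs.ne'] at this
  have hSx : S *ᵥ x = 0 := by
    have := (htS.dotProduct_mulVec_zero_iff x).mp h2
    rwa [smul_mulVec, smul_eq_zero, or_iff_right ht.ne'] at this
  have hdet' : (R - S).det = 0 :=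
    exists_mulVec_eq_zero_iff.mp ⟨x, hx, by rw [sub_mulVec, hRx, hSx, sub_zero]⟩
  have hH : (R - S).IsHermitian := hR.isHermitian.sub hS.isHermitian
  exact hRS (sub_eq_zero.mp
    (hH.eq_zero_of_trace_eq_zero_of_det_eq_zero (by rw [trace_sub, htr, sub_self]) hdet'))

theorem isProj_iff_isStarProjection {P : M₂} : IsProj P ↔ IsStarProjection P := by
  rw [isStarProjection_iff', IsProj, and_comm]

theorem IsProj.one_sub {P : M₂} (hP : IsProj P) : IsProj (1 - P) :=
  isProj_iff_isStarProjection.mpr (isProj_iff_isStarProjection.mp hP).one_sub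

theorem IsProj.posSemidef {P : M₂} (hP : IsProj P) : P.PosSemidef := by
  simpa [← star_eq_conjTranspose, hP.1, hP.2] using posSemidef_conjTranspose_mul_self P

theorem IsProj.trace_eq_one {P : M₂} (hP : IsProj P) (h0 : P ≠ 0) (h1 : P ≠ 1) :
    P.trace = 1 := by
  have hdet : P.det = 0 := by
    by_contra hdet
    have hunit : IsUnit P := (isUnit_iff_isUnit_det P).mpr (isUnit_iff_ne_zero.mpr hdet)
    exact h1 (hunit.mul_left_cancel (hP.2.trans (mul_one P).symm))
  have h : (P.trace - 1) • P = 0 := by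
    rw [sub_smul, one_smul, sub_eq_zero, ← sub_zero (P.trace • P), ← zero_smul ℂ (1 : M₂), ← hdet,
      ← mul_self_eq_trace_smul_sub_det_smul, hP.2]
  exact sub_eq_zero.mp ((smul_eq_zero.mp h).resolve_right h0)

theorem IsProj.not_isStrict {P : M₂} (hP : IsProj P) : ¬ IsStrict P := fun h =>
  have hP0 : P = 0 := h.1 P hP (by rw [MatLE, sub_self]; exact PosSemidef.zero)
  one_ne_zero (h.2 1 ⟨star_one _, one_mul 1⟩ (by rw [hP0, mul_zero]))

def IsSymmetry (J : M₂) : Prop := star J = J ∧ J * J = 1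

theorem IsProj.isSymmetry {P : M₂} (hP : IsProj P) : IsSymmetry ((2 : ℝ) • P - 1) := by
  refine ⟨by rw [star_sub, star_smul, star_trivial, hP.1, star_one], ?_⟩
  simp only [sub_mul, mul_sub, smul_mul_assoc, mul_smul_comm, hP.2, one_mul, mul_one]
  module

theorem IsSymmetry.isProj {J : M₂} (hJ : IsSymmetry J) : IsProj ((2 : ℝ)⁻¹ • (1 + J)) := by
  refine ⟨by rw [star_smul, star_trivial, star_add, star_one, hJ.1], ?_⟩
  simp only [add_mul, mul_add, smul_mul_smul_comm, hJ.2, one_mul, mul_one]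
  module

theorem exists_isSymmetry_of_mul_self_eq {C : M₂} {l : ℝ} (hC : C.IsHermitian)
    (h : (l • 1 : M₂) * (l • 1) = C * C) : ∃ J, IsSymmetry J ∧ C = l • J := by
  rcases eq_or_ne l 0 with rfl | hl
  · refine ⟨1, ⟨star_one _, one_mul 1⟩, ?_⟩
    rw [zero_smul, ← conjTranspose_mul_self_eq_zero, hC.eq, ← h, zero_smul, zero_mul]
  refine ⟨l⁻¹ • C, ⟨?_, ?_⟩, by rw [smul_smul, mul_inv_cancel₀ hl, one_smul]⟩
  · rw [star_smul, star_trivial, hC.star_eq]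
  · rw [smul_mul_smul_comm, ← h, smul_mul_smul_comm, smul_smul, one_mul, mul_mul_mul_comm,
      inv_mul_cancel₀ hl, one_mul, one_smul]

theorem exists_isProj_mul_eq_zero {X : M₂} (hX : X.IsHermitian) (hdet : X.det = 0) :
    ∃ R, IsProj R ∧ R ≠ 0 ∧ R * X = 0 := by
  by_cases htr : X.trace = 0
  · exact ⟨1, ⟨star_one _, one_mul 1⟩, one_ne_zero, by
      rw [one_mul, hX.eq_zero_of_trace_eq_zero_of_det_eq_zero htr hdet]⟩
  have hXX : X * X = X.trace • X := by
    rw [mul_self_eq_trace_smul_sub_det_smul, hdet, zero_smul, sub_zero]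
  have hstar : star X.trace⁻¹ = X.trace⁻¹ := by
    rw [star_inv₀, ← trace_conjTranspose, hX.eq]
  refine ⟨1 - X.trace⁻¹ • X, ⟨?_, ?_⟩, fun h => ?_, ?_⟩
  · rw [star_sub, star_one, star_smul, hstar, hX.star_eq]
  · simp only [sub_mul, mul_sub, one_mul, mul_one, smul_mul_smul_comm, hXX, smul_smul]
    rw [mul_assoc, inv_mul_cancel₀ htr, mul_one]
    abel
  · have := congrArg det (sub_eq_zero.mp h)
    rw [det_one, det_smul, hdet, mul_zero] at this
    exact one_ne_zero this
  · rw [sub_mul, one_mul, smul_mul_assoc, hXX, smul_smul, inv_mul_cancel₀ htr, one_smul, sub_self]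

theorem IsStrict.det_ne_zero {X : M₂} (hX : X.IsHermitian) (h : IsStrict X) : X.det ≠ 0 :=
  fun hdet =>
    let ⟨R, hR, hR0, hRX⟩ := exists_isProj_mul_eq_zero hX hdet
    hR0 (h.2 R hR hRX)

theorem IsStrict.det_one_sub_ne_zero {X : M₂} (hX : MatLE 0 X) (h : IsStrict X) :
    (1 - X).det ≠ 0 := by
  rw [MatLE, sub_zero] at hX
  intro hdet
  obtain ⟨R, hR, hR0, hRX⟩ := exists_isProj_mul_eq_zero (isHermitian_one.sub hX.isHermitian) hdet
  have hR' : R * X = R := by rwa [mul_sub, mul_one, sub_eq_zero, eq_comm] at hRX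
  have hR'' : X * R = R := by
    have := congrArg conjTranspose hR'
    rwa [conjTranspose_mul, hX.isHermitian.eq, ← star_eq_conjTranspose, hR.1] at this
  refine hR0 (h.1 R hR ?_)
  have : X - R = (1 - R)ᴴ * X * (1 - R) := by
    rw [← star_eq_conjTranspose, star_sub, star_one, hR.1]
    simp only [sub_mul, mul_sub, one_mul, mul_one, hR', hR'', hR.2]
    abel
  rw [MatLE, this]
  exact hX.conjTranspose_mul_mul_same _

open scoped Matrix.Norms.L2Operator MatrixOrder in
theorem isStrict_of_det_ne_zero {X : M₂} (hX : MatLE X 1) (h0 : X.det ≠ 0)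
    (h1 : (1 - X).det ≠ 0) : IsStrict X := by
  refine ⟨fun R hR hRX => ?_, fun R hR hRX => ?_⟩
  · have hle : 1 - X ≤ 1 - R := sub_le_sub_left hRX 1
    have := ((isProj_iff_isStarProjection.mp hR).one_sub.mul_right_and_mul_left_of_nonneg_of_le
      (sub_nonneg.mpr hX) hle).1
    rw [mul_sub, mul_one, sub_eq_self] at this
    exact ((isUnit_iff_isUnit_det _).mpr (isUnit_iff_ne_zero.mpr h1)).mul_right_eq_zero.mp this
  · exact ((isUnit_iff_isUnit_det _).mpr (isUnit_iff_ne_zero.mpr h0)).mul_left_eq_zero.mp hRX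

theorem AbsCompatible.exists_posSemidef {A B : M₂} (hA : A.IsHermitian) (hB : B.IsHermitian)
    (h : AbsCompatible A B) :
    ∃ u : M₂, u.PosSemidef ∧ (1 - u).PosSemidef ∧ u * u = (A - B) * (A - B) ∧
      (1 - u) * (1 - u) = (A + B - 1) * (A + B - 1) := by
  obtain ⟨u, v, hu, hv, huu, hvv, huv⟩ := h
  obtain rfl : v = 1 - u := eq_sub_of_add_eq' huv
  refine ⟨u, hu, hv, ?_, ?_⟩
  · rw [huu, (hA.sub hB).star_eq]
  · rw [hvv, ((isHermitian_one.sub hA).sub hB).star_eq]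
    noncomm_ring

theorem absCompatible_of_isSymmetry {A B J K : M₂} {l : ℝ} (hJ : IsSymmetry J)
    (hK : IsSymmetry K) (hl0 : 0 ≤ l) (hl1 : l ≤ 1) (hC : A - B = l • J)
    (hE : A + B - 1 = (1 - l) • K) : AbsCompatible A B := by
  refine ⟨l • 1, (1 - l) • 1, PosSemidef.one.smul hl0, PosSemidef.one.smul (sub_nonneg.2 hl1),
    ?_, ?_, by module⟩
  · rw [hC, star_smul, star_trivial, hJ.1, smul_mul_smul_comm, smul_mul_smul_comm, hJ.2, one_mul]
  · rw [show 1 - A - B = -(A + B - 1) by abel, hE, star_neg, star_smul, star_trivial, hK.1,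
      neg_mul_neg, smul_mul_smul_comm, smul_mul_smul_comm, hK.2, one_mul]

theorem AbsCompatible.mul_self_eq_of_commute {A B : M₂} (hA : A.IsHermitian)
    (hB : B.IsHermitian) (h : AbsCompatible A B) (hdet : A.det ≠ 0) (hdet' : (1 - A).det ≠ 0)
    (hAB : Commute A B) : B * B = B := by
  obtain ⟨u, hu, -, huu, hvv⟩ := h.exists_posSemidef hA hB
  have hu_eq : u = A + B - A * B - B * A := by
    refine smul_right_injective M₂ (two_ne_zero : (2 : ℂ) ≠ 0) ?_
    calc (2 : ℂ) • u = 1 + u * u - (1 - u) * (1 - u) := by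
          simp only [sub_mul, mul_sub, one_mul, mul_one]; module
      _ = 1 + (A - B) * (A - B) - (A + B - 1) * (A + B - 1) := by rw [huu, hvv]
      _ = (2 : ℂ) • (A + B - A * B - B * A) := by
          simp only [sub_mul, mul_sub, add_mul, mul_add, one_mul, mul_one]; module
  have hprod : (u - (A - B)) * (u + (A - B)) = 0 := by
    rw [sub_mul, mul_add, mul_add, huu, (hu.commute_of_mul_self_eq huu).eq]
    abel
  have hm : u - (A - B) = (2 : ℂ) • ((1 - A) * B) := by
    rw [hu_eq, ← hAB.eq, sub_mul, one_mul]; module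
  have hp : u + (A - B) = (2 : ℂ) • (A * (1 - B)) := by
    rw [hu_eq, ← hAB.eq, mul_sub, mul_one]; module
  rw [hm, hp, smul_mul_smul_comm, smul_eq_zero, or_iff_right (by norm_num)] at hprod
  have hzero : (1 - A) * A * (B * (1 - B)) = 0 := by
    rwa [mul_assoc, ← mul_assoc A, hAB.eq, mul_assoc B, ← mul_assoc]
  have hunit : IsUnit ((1 - A) * A) :=
    ((isUnit_iff_isUnit_det _).mpr (isUnit_iff_ne_zero.mpr hdet')).mul
      ((isUnit_iff_isUnit_det _).mpr (isUnit_iff_ne_zero.mpr hdet))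
  rw [hunit.mul_right_eq_zero, mul_sub, mul_one, sub_eq_zero] at hzero
  exact hzero.symm

theorem AbsCompatible.exists_isSymmetry {A B : M₂} (hA : A.IsHermitian) (hB : B.IsHermitian)
    (h : AbsCompatible A B) (hAB : ¬ Commute A B) :
    ∃ l : ℝ, 0 < l ∧ l < 1 ∧ ∃ J K : M₂, IsSymmetry J ∧ IsSymmetry K ∧
      A - B = l • J ∧ A + B - 1 = (1 - l) • K := by
  obtain ⟨u, hu, hv, huu, hvv⟩ := h.exists_posSemidef hA hB
  obtain ⟨c, rfl⟩ : ∃ c : ℂ, u = c • 1 := by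
    by_contra! hne
    have hCu := hu.commute_of_mul_self_eq huu
    have hEu : Commute u (A + B - 1) := by
      simpa using (Commute.one_left _).sub_left (hv.commute_of_mul_self_eq hvv)
    refine hAB (commute_of_commute_of_ne_smul_one hne ?_ ?_)
    · rw [show A = (2⁻¹ : ℂ) • (A - B + (A + B - 1) + 1) by module]
      exact ((hCu.add_right hEu).add_right (Commute.one_right u)).smul_right _
    · rw [show B = (2⁻¹ : ℂ) • (A + B - 1 - (A - B) + 1) by module]
      exact ((hEu.sub_right hCu).add_right (Commute.one_right u)).smul_right _
  have hc : 0 ≤ c := by simpa using hu.diag_nonneg (i := 0)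
  obtain ⟨l, rfl⟩ : ∃ l : ℝ, c = l :=
    ⟨c.re, Complex.eq_re_of_ofReal_le (by rwa [Complex.ofReal_zero])⟩
  have hv' : (1 - l : ℝ) • (1 : M₂) = 1 - (l : ℂ) • 1 := by rw [Complex.coe_smul]; module
  rw [Complex.coe_smul] at huu
  rw [← hv'] at hv hvv
  have hl1 : (l : ℂ) ≤ 1 := by simpa using hv.diag_nonneg (i := 0)
  obtain ⟨J, hJ, hCJ⟩ := exists_isSymmetry_of_mul_self_eq (hA.sub hB) huu
  obtain ⟨K, hK, hEK⟩ := exists_isSymmetry_of_mul_self_eq ((hA.add hB).sub isHermitian_one) hvv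
  refine ⟨l, lt_of_le_of_ne (by exact_mod_cast hc) ?_, lt_of_le_of_ne (by exact_mod_cast hl1) ?_,
    J, K, hJ, hK, hCJ, hEK⟩
  · rintro rfl
    rw [zero_smul, sub_eq_zero] at hCJ
    exact hAB (hCJ ▸ Commute.refl B)
  · rintro rfl
    rw [sub_self, zero_smul, sub_eq_zero, ← eq_sub_iff_add_eq'] at hEK
    exact hAB (hEK ▸ (Commute.one_right A).sub_right (Commute.refl A))

theorem exists_decomposition_of_isStrict_of_absCompatible {A B : M₂} (hA0 : MatLE 0 A)
    (hB0 : MatLE 0 B) (hsA : IsStrict A) (hsB : IsStrict B) (h : AbsCompatible A B) :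
    ∃ (P Q : M₂) (l : ℝ), IsProj P ∧ P ≠ 0 ∧ P ≠ 1 ∧ IsProj Q ∧ Q ≠ 0 ∧ Q ≠ 1 ∧
      P ≠ Q ∧ P ≠ 1 - Q ∧ 0 < l ∧ l < 1 ∧
      A = (1 - l) • P + l • Q ∧ B = (1 - l) • P + l • (1 - Q) := by
  have hA : A.IsHermitian := by simpa using (hA0 : (A - 0).PosSemidef).isHermitian
  have hB : B.IsHermitian := by simpa using (hB0 : (B - 0).PosSemidef).isHermitian
  have hAB : ¬ Commute A B := fun hAB => IsProj.not_isStrict ⟨hB.eq,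
    h.mul_self_eq_of_commute hA hB (hsA.det_ne_zero hA) (hsA.det_one_sub_ne_zero hA0) hAB⟩ hsB
  obtain ⟨l, hl0, hl1, J, K, hJ, hK, hC, hE⟩ := h.exists_isSymmetry hA hB hAB
  set P : M₂ := (2 : ℝ)⁻¹ • (1 + K)
  set Q : M₂ := (2 : ℝ)⁻¹ • (1 + J)
  have hA' : A = (1 - l) • P + l • Q := by
    linear_combination (norm := module) (2⁻¹ : ℝ) • hC + (2⁻¹ : ℝ) • hE
  have hB' : B = (1 - l) • P + l • (1 - Q) := by
    linear_combination (norm := module) (2⁻¹ : ℝ) • hE - (2⁻¹ : ℝ) • hC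
  have hPQ : ¬ Commute P Q := by
    refine fun hPQ => hAB ?_
    have hAP : Commute A P := by
      rw [hA']; exact ((Commute.refl P).smul_left _).add_left (hPQ.symm.smul_left _)
    have hAQ : Commute A Q := by
      rw [hA']; exact (hPQ.smul_left _).add_left ((Commute.refl Q).smul_left _)
    rw [hB']
    exact (hAP.smul_right _).add_right (((Commute.one_right A).sub_right hAQ).smul_right _)
  refine ⟨P, Q, l, hK.isProj, fun h => hPQ (h ▸ .zero_left Q), fun h => hPQ (h ▸ .one_left Q),
    hJ.isProj, fun h => hPQ (h ▸ .zero_right P), fun h => hPQ (h ▸ .one_right P),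
    fun h => hPQ (h ▸ .refl Q), fun h => hPQ (h ▸ (Commute.one_left Q).sub_left (.refl Q)),
    hl0, hl1, hA', hB'⟩

theorem isStrict_and_absCompatible_of_eq {A B P Q : M₂} {l : ℝ} (hA1 : MatLE A 1)
    (hB1 : MatLE B 1) (hP : IsProj P) (hP0 : P ≠ 0) (hP1 : P ≠ 1) (hQ : IsProj Q) (hQ0 : Q ≠ 0)
    (hQ1 : Q ≠ 1) (hPQ : P ≠ Q) (hPQ' : P ≠ 1 - Q) (hl0 : 0 < l) (hl1 : l < 1)
    (hA : A = (1 - l) • P + l • Q) (hB : B = (1 - l) • P + l • (1 - Q)) :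
    IsStrict A ∧ IsStrict B ∧ AbsCompatible A B := by
  have htrP := hP.trace_eq_one hP0 hP1
  have htrQ := hQ.trace_eq_one hQ0 hQ1
  have htr_one_sub {R : M₂} (h : R.trace = 1) : (1 - R).trace = 1 := by
    rw [trace_sub, trace_one, h, Fintype.card_fin]; norm_num
  have hdet {R S : M₂} (hR : IsProj R) (hS : IsProj S) (hRt : R.trace = 1) (hSt : S.trace = 1)
      (hRS : R ≠ S) : ((1 - l) • R + l • S).det ≠ 0 :=
    det_smul_add_smul_ne_zero hR.posSemidef hS.posSemidef (hRt.trans hSt.symm) hRS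
      (sub_pos.2 hl1) hl0
  refine ⟨isStrict_of_det_ne_zero hA1 ?_ ?_, isStrict_of_det_ne_zero hB1 ?_ ?_,
    absCompatible_of_isSymmetry hQ.isSymmetry hP.isSymmetry hl0.le hl1.le ?_ ?_⟩
  · exact hA ▸ hdet hP hQ htrP htrQ hPQ
  · rw [show 1 - A = (1 - l) • (1 - P) + l • (1 - Q) by rw [hA]; module]
    exact hdet hP.one_sub hQ.one_sub (htr_one_sub htrP) (htr_one_sub htrQ)
      (fun h => hPQ (sub_right_injective h))
  · exact hB ▸ hdet hP hQ.one_sub htrP (htr_one_sub htrQ) hPQ'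
  · rw [show 1 - B = (1 - l) • (1 - P) + l • Q by rw [hB]; module]
    exact hdet hP.one_sub hQ (htr_one_sub htrP) htrQ (fun h => hPQ' (by rw [← h, sub_sub_cancel]))
  · rw [hA, hB]; module
  · rw [hA, hB]; module

/-- Theorem 11: `A, B ∈ M₂(ℂ)` with `0 ≤ A, B ≤ I₂` are strict and absolutely
compatible iff there are rank-one projections `P, Q` with `P ∉ {Q, I₂ - Q}` and `0 < λ < 1`
with `A = (1 - λ)P + λQ` and `B = (1 - λ)P + λ(I₂ - Q)`. -/
theorem statement13 {A B : Matrix (Fin 2) (Fin 2) ℂ}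
    (hA0 : MatLE 0 A) (hA1 : MatLE A 1) (hB0 : MatLE 0 B) (hB1 : MatLE B 1) :
    (IsStrict A ∧ IsStrict B ∧ AbsCompatible A B) ↔
      ∃ (P Q : Matrix (Fin 2) (Fin 2) ℂ) (l : ℝ),
        IsProj P ∧ P ≠ 0 ∧ P ≠ 1 ∧ IsProj Q ∧ Q ≠ 0 ∧ Q ≠ 1 ∧
        P ≠ Q ∧ P ≠ 1 - Q ∧ 0 < l ∧ l < 1 ∧
        A = (1 - l) • P + l • Q ∧ B = (1 - l) • P + l • (1 - Q) := by
  constructor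
  · rintro ⟨hsA, hsB, h⟩
    exact exists_decomposition_of_isStrict_of_absCompatible hA0 hB0 hsA hsB h
  · rintro ⟨P, Q, l, hP, hP0, hP1, hQ, hQ0, hQ1, hPQ, hPQ', hl0, hl1, hA, hB⟩
    exact isStrict_and_absCompatible_of_eq hA1 hB1 hP hP0 hP1 hQ hQ0 hQ1 hPQ hPQ' hl0 hl1 hA hB
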